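/- For binary gene tree (T;t,σ) and binary species tree S, if μ is a reconciliation map satisfying (M1)-(M3), then the map γ defined by γ(u) = μ(u) if μ(u) ∈ V(S), and γ(u) = y if μ(u) = (x,y) ∈ E(S), is a valid DTL-scenario map, i.e., it satisfies conditions (I)-(IV) of the DTL axioms. -/
import Mathlib


/-- A rooted tree on vertex type `V`, encoded by a parent map.
Edges are directed away from the root; the edge into a non-root vertex `v`
is `(par v, v)`. -/
structure RTree (V : Type*) where
  root : V
  par : V → V
  par_root : par root = root
  par_ne : ∀ v, v ≠ root → par v ≠ v
  reaches : ∀ v, ∃ k, par^[k] v = root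

namespace RTree

variable {V : Type*}

/-- `anc T x y` : `x` is a descendant of `y`, i.e. `x ⪯_T y`. -/
def anc (T : RTree V) (x y : V) : Prop := ∃ k, (T.par)^[k] x = y

/-- strict descendant: `x ≺_T y`. -/
def sanc (T : RTree V) (x y : V) : Prop := T.anc x y ∧ x ≠ y

def IsLeaf (T : RTree V) (v : V) : Prop := ∀ u, T.par u = v → u = v

/-- `x` is a least common ancestor of the set `A`. -/
def IsLca (T : RTree V) (A : Set V) (x : V) : Prop :=
  (∀ a ∈ A, T.anc a x) ∧ ∀ y, (∀ a ∈ A, T.anc a y) → T.anc x y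

/-- A time map: strict descendants have strictly larger time stamps. -/
def IsTimeMap (T : RTree V) (τ : V → ℝ) : Prop :=
  ∀ x y, T.sanc x y → τ y < τ x

end RTree

/-- Event labels: speciation `•`, duplication `□`, HGT `△`, leaf `⊙`. -/
inductive Event where
  | spec | dup | hgt | leaf
deriving DecidableEq

/-- The common setup: a gene tree `T` (vertices `V`) with event labels `t`,
transfer edges `trans` (an edge is recorded by its child endpoint),
a species tree `S` (vertices `W`), the map `sig = σ` assigning to each gene
(leaf of `T`) the species (leaf of `S`) it resides in, and a least common
ancestor function `lca` on the species tree. -/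
structure ReconSetup (V W : Type*) where
  T : RTree V
  S : RTree W
  t : V → Event
  trans : Set V
  sig : V → W
  lca : Set W → W
  trans_ne_root : ∀ v ∈ trans, v ≠ T.root
  trans_hgt : ∀ v ∈ trans, t (T.par v) = Event.hgt
  leaf_iff : ∀ v, T.IsLeaf v ↔ t v = Event.leaf
  sig_leaf : ∀ v, T.IsLeaf v → S.IsLeaf (sig v)
  lca_spec : ∀ A : Set W, A.Nonempty → S.IsLca A (lca A)

/-- lower endpoint of a vertex-or-edge of the species tree
(an edge `(S.par y, y)` is encoded as `Sum.inr y`; a vertex `x` as `Sum.inl x`). -/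
def lowPt {W : Type*} : W ⊕ W → W := Sum.elim id id

namespace ReconSetup

variable {V W : Type*}

/-- ancestor order of the forest `T_{E̅}` obtained by deleting transfer edges. -/
def fanc (R : ReconSetup V W) (x y : V) : Prop :=
  ∃ k, (R.T.par)^[k] x = y ∧ ∀ i < k, (R.T.par)^[i] x ∉ R.trans

def sfanc (R : ReconSetup V W) (x y : V) : Prop := R.fanc x y ∧ x ≠ y

/-- `σ_{T̅}(u)`: the species of the leaves of `T` below `u` in the forest `T_{E̅}`. -/
def sigmaBar (R : ReconSetup V W) (u : V) : Set W :=
  R.sig '' {l | R.T.IsLeaf l ∧ R.fanc l u}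

/-- Ancestor order of `S` extended to vertices and edges:
`z ⪯ (x,y) ↔ z ⪯ y`, `(x,y) ⪯ z ↔ x ⪯ z`, `(x,y) ⪯ (a,b) ↔ y ⪯ b`. -/
def extLE (R : ReconSetup V W) : W ⊕ W → W ⊕ W → Prop
  | Sum.inl a, Sum.inl b => R.S.anc a b
  | Sum.inl a, Sum.inr y => R.S.anc a y
  | Sum.inr y, Sum.inl b => R.S.anc (R.S.par y) b
  | Sum.inr y, Sum.inr z => R.S.anc y z

def extLT (R : ReconSetup V W) (p q : W ⊕ W) : Prop := R.extLE p q ∧ ¬ R.extLE q p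

def incomp (R : ReconSetup V W) (p q : W ⊕ W) : Prop := ¬ R.extLE p q ∧ ¬ R.extLE q p

def IsDupHGT (R : ReconSetup V W) (u : V) : Prop :=
  R.t u = Event.dup ∨ R.t u = Event.hgt

/-- (M1) leaf constraint. -/
def M1 (R : ReconSetup V W) (μ : V → W ⊕ W) : Prop :=
  ∀ u, R.T.IsLeaf u → μ u = Sum.inl (R.sig u)

/-- (M2i) speciation vertices map to the lca of the species below them. -/
def M2i (R : ReconSetup V W) (μ : V → W ⊕ W) : Prop :=
  ∀ u, R.t u = Event.spec → μ u = Sum.inl (R.lca (R.sigmaBar u))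

/-- (M2ii) duplication/HGT vertices map to edges of `S`. -/
def M2ii (R : ReconSetup V W) (μ : V → W ⊕ W) : Prop :=
  ∀ u, R.IsDupHGT u → ∃ y, y ≠ R.S.root ∧ μ u = Sum.inr y

/-- (M2iii) the endpoints of a transfer edge receive incomparable images. -/
def M2iii (R : ReconSetup V W) (μ : V → W ⊕ W) : Prop :=
  ∀ v ∈ R.trans, R.incomp (μ (R.T.par v)) (μ v)

/-- (M3) ancestor constraint within components of `T_{E̅}`. -/
def M3 (R : ReconSetup V W) (μ : V → W ⊕ W) : Prop :=
  ∀ v w, R.sfanc v w →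
    ((R.IsDupHGT v ∧ R.IsDupHGT w) → R.extLE (μ v) (μ w)) ∧
    (¬ (R.IsDupHGT v ∧ R.IsDupHGT w) → R.extLT (μ v) (μ w))

/-- `μ` is a reconciliation map from `(T;t,σ)` to `S`. -/
def IsRecon (R : ReconSetup V W) (μ : V → W ⊕ W) : Prop :=
  R.M1 μ ∧ R.M2i μ ∧ R.M2ii μ ∧ R.M2iii μ ∧ R.M3 μ

/-- (O1) every internal vertex has at least two children. -/
def O1 (R : ReconSetup V W) : Prop :=
  ∀ v, ¬ R.T.IsLeaf v →
    ∃ a b, a ≠ b ∧ R.T.par a = v ∧ R.T.par b = v ∧ a ≠ v ∧ b ≠ v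

/-- (O2) every HGT vertex has a transfer child edge and a non-transfer child edge. -/
def O2 (R : ReconSetup V W) : Prop :=
  ∀ v, R.t v = Event.hgt →
    (∃ c, R.T.par c = v ∧ c ∈ R.trans) ∧ (∃ c, R.T.par c = v ∧ c ≠ v ∧ c ∉ R.trans)

/-- (Σ1) a speciation vertex has two children whose species sets are disjoint. -/
def Sigma1 (R : ReconSetup V W) : Prop :=
  ∀ x, R.t x = Event.spec →
    ∃ v w, v ≠ w ∧ R.T.par v = x ∧ R.T.par w = x ∧ v ≠ x ∧ w ≠ x ∧
      R.sigmaBar v ∩ R.sigmaBar w = ∅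

/-- (Σ2) the species sets across a transfer edge are disjoint. -/
def Sigma2 (R : ReconSetup V W) : Prop :=
  ∀ w ∈ R.trans, R.sigmaBar (R.T.par w) ∩ R.sigmaBar w = ∅

/-- the gene tree is binary. -/
def BinaryT (R : ReconSetup V W) : Prop :=
  ∀ v, ¬ R.T.IsLeaf v →
    ∃ a b, a ≠ b ∧ ∀ c, (R.T.par c = v ∧ c ≠ v) ↔ (c = a ∨ c = b)

/-- the species tree is binary. -/
def BinaryS (R : ReconSetup V W) : Prop :=
  ∀ v, ¬ R.S.IsLeaf v →
    ∃ a b, a ≠ b ∧ ∀ c, (R.S.par c = v ∧ c ≠ v) ↔ (c = a ∨ c = b)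

/-- (C1) speciation vertices and leaves get the same time as their image. -/
def C1 (R : ReconSetup V W) (μ : V → W ⊕ W) (τT : V → ℝ) (τS : W → ℝ) : Prop :=
  ∀ u x, (R.t u = Event.spec ∨ R.t u = Event.leaf) → μ u = Sum.inl x → τT u = τS x

/-- (C2) a vertex mapped into an edge `(x,y)` gets a time strictly between
the times of `x` and `y`. -/
def C2 (R : ReconSetup V W) (μ : V → W ⊕ W) (τT : V → ℝ) (τS : W → ℝ) : Prop :=
  ∀ u y, R.IsDupHGT u → μ u = Sum.inr y → τS (R.S.par y) < τT u ∧ τT u < τS y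

/-- `μ` is a time-consistent reconciliation map. -/
def TimeConsistent (R : ReconSetup V W) (μ : V → W ⊕ W) : Prop :=
  ∃ τT τS, R.T.IsTimeMap τT ∧ R.S.IsTimeMap τS ∧ R.C1 μ τT τS ∧ R.C2 μ τT τS

/-- (D1). -/
def D1 (R : ReconSetup V W) (μ : V → W ⊕ W) (τT : V → ℝ) (τS : W → ℝ) : Prop :=
  ∀ u x, μ u = Sum.inl x → τT u = τS x

/-- (D2). -/
def D2 (R : ReconSetup V W) (τT : V → ℝ) (τS : W → ℝ) : Prop :=
  ∀ u x, R.IsDupHGT u → R.S.anc x (R.lca (R.sigmaBar u)) → τT u < τS x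

/-- (D3), for a transfer edge `(T.par v, v)` with `v ∈ trans`. -/
def D3 (R : ReconSetup V W) (τT : V → ℝ) (τS : W → ℝ) : Prop :=
  ∀ v x, v ∈ R.trans →
    R.S.anc (R.lca (R.sigmaBar (R.T.par v) ∪ R.sigmaBar v)) x → τS x < τT (R.T.par v)

/-- The DTL-scenario axioms (I)-(IV) for a map `γ : V(T) → V(S)`. -/
def DTL (R : ReconSetup V W) (γ : V → W) : Prop :=
  (∀ u, R.T.IsLeaf u → γ u = R.sig u) ∧
  (∀ u v w, v ≠ w → R.T.par v = u → R.T.par w = u → v ≠ u → w ≠ u →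
    ((¬ R.S.sanc (γ u) (γ v) ∧ ¬ R.S.sanc (γ u) (γ w)) ∧
     (R.S.anc (γ v) (γ u) ∨ R.S.anc (γ w) (γ u)))) ∧
  (∀ v, v ≠ R.T.root →
    (v ∈ R.trans ↔ (¬ R.S.anc (γ (R.T.par v)) (γ v) ∧ ¬ R.S.anc (γ v) (γ (R.T.par v))))) ∧
  (∀ u v w, v ≠ w → R.T.par v = u → R.T.par w = u → v ≠ u → w ≠ u →
    ((R.t u = Event.hgt ↔ (v ∈ R.trans ∨ w ∈ R.trans)) ∧
     (R.t u = Event.spec →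
       γ u = R.lca {γ v, γ w} ∧ ¬ R.S.anc (γ v) (γ w) ∧ ¬ R.S.anc (γ w) (γ v)) ∧
     (R.t u = Event.dup → R.S.anc (R.lca {γ v, γ w}) (γ u))))

end ReconSetup

/-- A directed graph (relation) is acyclic: no edge closes a directed cycle. -/
def Acyclic {α : Type*} (r : α → α → Prop) : Prop :=
  ∀ x y, r x y → ¬ Relation.ReflTransGen r y x


section Aux

namespace RTree

variable {V : Type*}

lemma anc_refl (T : RTree V) (x : V) : T.anc x x := ⟨0, rfl⟩

lemma anc_trans' (T : RTree V) {x y z : V} (h1 : T.anc x y) (h2 : T.anc y z) : T.anc x z := by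
  obtain ⟨k, hk⟩ := h1
  obtain ⟨m, hm⟩ := h2
  exact ⟨m + k, by rw [Function.iterate_add_apply, hk, hm]⟩

lemma anc_par' (T : RTree V) (x : V) : T.anc x (T.par x) := ⟨1, rfl⟩

lemma iterate_par_root (T : RTree V) : ∀ i, T.par^[i] T.root = T.root
  | 0 => rfl
  | i + 1 => by rw [Function.iterate_succ_apply', iterate_par_root T i, T.par_root]

lemma anc_antisymm (T : RTree V) {x y : V} (h1 : T.anc x y) (h2 : T.anc y x) : x = y := by
  obtain ⟨k, hk⟩ := h1
  obtain ⟨m, hm⟩ := h2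
  rcases Nat.eq_zero_or_pos k with h0 | hpos
  · subst h0; exact hk
  have hp : T.par^[m + k] x = x := by
    rw [Function.iterate_add_apply, hk, hm]
  have hppos : 0 < m + k := lt_of_lt_of_le hpos (Nat.le_add_left _ _)
  have hcycle : ∀ n, T.par^[n * (m + k)] x = x := by
    intro n
    induction n with
    | zero => simp
    | succ n ih => rw [Nat.succ_mul, Function.iterate_add_apply, hp, ih]
  obtain ⟨j, hj⟩ := T.reaches x
  have hle : j ≤ j * (m + k) := Nat.le_mul_of_pos_right j hppos
  have hroot : T.par^[j * (m + k)] x = T.root := by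
    rw [← Nat.sub_add_cancel hle, Function.iterate_add_apply, hj, T.iterate_par_root]
  have hxr : x = T.root := by rw [← hcycle j, hroot]
  subst hxr
  rw [T.iterate_par_root] at hk
  exact hk

end RTree

namespace ReconSetup

variable {V W : Type*}

lemma extLE_lowPt (R : ReconSetup V W) {p q : W ⊕ W} (h : R.extLE p q) :
    R.S.anc (lowPt p) (lowPt q) := by
  cases p with
  | inl a =>
    cases q with
    | inl b => exact h
    | inr y => exact h
  | inr y =>
    cases q with
    | inl b => exact R.S.anc_trans' (R.S.anc_par' y) h
    | inr z => exact h

lemma extLE_of_sfanc (R : ReconSetup V W) {μ : V → W ⊕ W} (hrec : R.IsRecon μ)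
    {v w : V} (h : R.sfanc v w) : R.extLE (μ v) (μ w) := by
  have hM3 := hrec.2.2.2.2 v w h
  by_cases hd : R.IsDupHGT v ∧ R.IsDupHGT w
  · exact hM3.1 hd
  · exact (hM3.2 hd).1

lemma extLT_inl_sanc (R : ReconSetup V W) {p : W ⊕ W} {x : W}
    (h : R.extLT p (Sum.inl x)) : R.S.sanc (lowPt p) x := by
  obtain ⟨h1, h2⟩ := h
  cases p with
  | inl a =>
    refine ⟨h1, fun he => h2 ?_⟩
    have he' : a = x := he
    subst he'
    exact R.S.anc_refl a
  | inr y =>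
    refine ⟨R.S.anc_trans' (R.S.anc_par' y) h1, fun he => h2 ?_⟩
    have he' : y = x := he
    subst he'
    exact R.S.anc_refl y

lemma lca_unique (R : ReconSetup V W) {A : Set W} {x y : W}
    (hx : R.S.IsLca A x) (hy : R.S.IsLca A y) : x = y :=
  R.S.anc_antisymm (hx.2 y hy.1) (hy.2 x hx.1)

lemma sfanc_child (R : ReconSetup V W) {c u : V} (hpc : R.T.par c = u) (hcu : c ≠ u)
    (hct : c ∉ R.trans) : R.sfanc c u := by
  refine ⟨⟨1, by simpa using hpc, ?_⟩, hcu⟩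
  intro i hi
  have : i = 0 := Nat.lt_one_iff.1 hi
  subst this
  exact hct

lemma anc_lowPt_child (R : ReconSetup V W) {μ : V → W ⊕ W} (hrec : R.IsRecon μ)
    {c u : V} (hpc : R.T.par c = u) (hcu : c ≠ u) (hct : c ∉ R.trans) :
    R.S.anc (lowPt (μ c)) (lowPt (μ u)) :=
  R.extLE_lowPt (R.extLE_of_sfanc hrec (R.sfanc_child hpc hcu hct))

lemma incomp_lowPt (R : ReconSetup V W) {μ : V → W ⊕ W} (hrec : R.IsRecon μ)
    {v : V} (hv : v ∈ R.trans) :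
    ¬ R.S.anc (lowPt (μ (R.T.par v))) (lowPt (μ v)) ∧
      ¬ R.S.anc (lowPt (μ v)) (lowPt (μ (R.T.par v))) := by
  have hh := R.trans_hgt v hv
  obtain ⟨y, _, hμ⟩ := hrec.2.2.1 (R.T.par v) (Or.inr hh)
  have hinc := hrec.2.2.2.1 v hv
  rw [hμ] at hinc ⊢
  cases hμv : μ v with
  | inl b =>
    rw [hμv] at hinc
    have h1 : ¬ R.S.anc (R.S.par y) b := hinc.1
    have h2 : ¬ R.S.anc b y := hinc.2
    constructor
    · rintro ⟨k, hk⟩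
      match k, hk with
      | 0, hk =>
        have hyb : y = b := hk
        subst hyb
        exact h2 (R.S.anc_refl y)
      | k + 1, hk =>
        exact h1 ⟨k, by rw [← Function.iterate_succ_apply]; exact hk⟩
    · exact h2
  | inr z =>
    rw [hμv] at hinc
    exact ⟨hinc.1, hinc.2⟩

lemma fanc_refl (R : ReconSetup V W) (u : V) : R.fanc u u :=
  ⟨0, rfl, fun i hi => absurd hi (Nat.not_lt_zero _)⟩

lemma fanc_step (R : ReconSetup V W) {l c u : V} (h : R.fanc l c) (hpc : R.T.par c = u)
    (hct : c ∉ R.trans) : R.fanc l u := by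
  obtain ⟨k, hk, hkt⟩ := h
  refine ⟨k + 1, by rw [Function.iterate_succ_apply', hk, hpc], ?_⟩
  intro i hi
  rcases Nat.lt_succ_iff_lt_or_eq.1 hi with h | h
  · exact hkt i h
  · rw [h, hk]; exact hct

lemma fanc_decomp_aux (R : ReconSetup V W) {l u : V} :
    ∀ k, (R.T.par)^[k] l = u → (∀ i < k, (R.T.par)^[i] l ∉ R.trans) → l ≠ u →
    ∃ c, R.T.par c = u ∧ c ≠ u ∧ c ∉ R.trans ∧ R.fanc l c := by
  intro k
  induction k using Nat.strong_induction_on with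
  | _ k ih =>
    intro hk hkt hne
    match k, hk, hkt, ih with
    | 0, hk, _, _ => exact absurd hk hne
    | m + 1, hk, hkt, ih =>
      have hpc : R.T.par ((R.T.par)^[m] l) = u := by
        rw [← Function.iterate_succ_apply' R.T.par m l]; exact hk
      by_cases hcu : (R.T.par)^[m] l = u
      · exact ih m (Nat.lt_succ_self m) hcu (fun i hi => hkt i (hi.trans (Nat.lt_succ_self m))) hne
      · exact ⟨(R.T.par)^[m] l, hpc, hcu, hkt m (Nat.lt_succ_self m),
          ⟨m, rfl, fun i hi => hkt i (hi.trans (Nat.lt_succ_self m))⟩⟩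

lemma fanc_decomp (R : ReconSetup V W) {l u : V} (h : R.fanc l u) (hne : l ≠ u) :
    ∃ c, R.T.par c = u ∧ c ≠ u ∧ c ∉ R.trans ∧ R.fanc l c := by
  obtain ⟨k, hk, hkt⟩ := h
  exact R.fanc_decomp_aux k hk hkt hne

lemma exists_leaf_below [Fintype V] (R : ReconSetup V W) (hO1 : R.O1) (hO2 : R.O2)
    (u : V) : ∃ l, R.T.IsLeaf l ∧ R.fanc l u := by
  generalize hn : Set.ncard {x | R.T.anc x u} = n
  induction n using Nat.strong_induction_on generalizing u with
  | _ n ih =>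
    by_cases hl : R.T.IsLeaf u
    · exact ⟨u, hl, R.fanc_refl u⟩
    · obtain ⟨c, hpc, hcne, hct⟩ : ∃ c, R.T.par c = u ∧ c ≠ u ∧ c ∉ R.trans := by
        by_cases hh : R.t u = Event.hgt
        · obtain ⟨_, c, h1, h2, h3⟩ := hO2 u hh
          exact ⟨c, h1, h2, h3⟩
        · obtain ⟨a, b, _, ha, _, hane, _⟩ := hO1 u hl
          exact ⟨a, ha, hane, fun hc => hh (ha ▸ R.trans_hgt a hc)⟩
      have hanccu : R.T.anc c u := hpc ▸ R.T.anc_par' c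
      have hsub : {x | R.T.anc x c} ⊂ {x | R.T.anc x u} := by
        refine HasSubset.Subset.ssubset_of_ne (fun x hx => R.T.anc_trans' hx hanccu) ?_
        intro heq
        have hu : u ∈ {x | R.T.anc x c} := heq ▸ (R.T.anc_refl u)
        exact hcne (R.T.anc_antisymm hanccu hu)
      have hlt : Set.ncard {x | R.T.anc x c} < n :=
        hn ▸ Set.ncard_lt_ncard hsub (Set.toFinite _)
      obtain ⟨l, hll, hf⟩ := ih _ hlt c rfl
      exact ⟨l, hll, R.fanc_step hf hpc hct⟩

lemma sig_below (R : ReconSetup V W) {μ : V → W ⊕ W} (hrec : R.IsRecon μ)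
    {s : W} {v : V} (hs : s ∈ R.sigmaBar v) : R.S.anc s (lowPt (μ v)) := by
  obtain ⟨l, ⟨hleaf, hfanc⟩, rfl⟩ := hs
  by_cases hlv : l = v
  · subst hlv
    rw [hrec.1 l hleaf]
    exact R.S.anc_refl _
  · have hM3 := hrec.2.2.2.2 l v ⟨hfanc, hlv⟩
    have hnd : ¬ R.IsDupHGT l := by
      have ht := (R.leaf_iff l).1 hleaf
      rintro (h | h) <;> rw [ht] at h <;> exact Event.noConfusion h
    have hle : R.extLE (μ l) (μ v) := (hM3.2 (fun h => hnd h.1)).1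
    have := R.extLE_lowPt hle
    rwa [hrec.1 l hleaf] at this

end ReconSetup

end Aux

/-- for binary gene and species trees, a reconciliation map `μ`
induces (via lower endpoints of edges) a map `γ` satisfying the DTL axioms. -/
theorem stmt7 {V W : Type*} [Fintype V] (R : ReconSetup V W) (μ : V → W ⊕ W)
    (hrec : R.IsRecon μ) (hO1 : R.O1) (hO2 : R.O2)
    (hS1 : R.Sigma1) (hS2 : R.Sigma2) (hbinT : R.BinaryT) (hbinS : R.BinaryS) :
    R.DTL (fun u => lowPt (μ u)) := by
  obtain ⟨hM1, hM2i, hM2ii, hM2iii, hM3⟩ := hrec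
  have hrec' : R.IsRecon μ := ⟨hM1, hM2i, hM2ii, hM2iii, hM3⟩
  refine ⟨?_, ?_, ?_, ?_⟩
  · -- (I)
    intro u hu
    show lowPt (μ u) = R.sig u
    rw [hM1 u hu]
    rfl
  · -- (II)
    intro u v w hvw hpv hpw hvu hwu
    have key : ∀ c, R.T.par c = u → c ≠ u → ¬ R.S.sanc (lowPt (μ u)) (lowPt (μ c)) := by
      intro c hpc hcu hs
      by_cases hct : c ∈ R.trans
      · have := (R.incomp_lowPt hrec' hct).1
        rw [hpc] at this
        exact this hs.1
      · have h := R.anc_lowPt_child hrec' hpc hcu hct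
        exact hs.2 (R.S.anc_antisymm hs.1 h)
    refine ⟨⟨key v hpv hvu, key w hpw hwu⟩, ?_⟩
    by_cases hh : R.t u = Event.hgt
    · have hnl : ¬ R.T.IsLeaf u := fun h => hvu (h v hpv)
      obtain ⟨a, b, hab, hiff⟩ := hbinT u hnl
      obtain ⟨_, c, hc1, hc2, hc3⟩ := hO2 u hh
      have hchild : c = v ∨ c = w := by
        have hv' := (hiff v).1 ⟨hpv, hvu⟩
        have hw' := (hiff w).1 ⟨hpw, hwu⟩
        have hc' := (hiff c).1 ⟨hc1, hc2⟩
        rcases hv' with rfl | rfl <;> rcases hw' with rfl | rfl <;>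
          rcases hc' with rfl | rfl <;> tauto
      rcases hchild with rfl | rfl
      · exact Or.inl (R.anc_lowPt_child hrec' hpv hvu hc3)
      · exact Or.inr (R.anc_lowPt_child hrec' hpw hwu hc3)
    · have hvt : v ∉ R.trans := fun h => hh (hpv ▸ R.trans_hgt v h)
      exact Or.inl (R.anc_lowPt_child hrec' hpv hvu hvt)
  · -- (III)
    intro x hx
    constructor
    · intro hxt
      exact R.incomp_lowPt hrec' hxt
    · intro h
      by_contra hxt
      exact h.2 (R.anc_lowPt_child hrec' rfl (Ne.symm (R.T.par_ne x hx)) hxt)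
  · -- (IV)
    intro u v w hvw hpv hpw hvu hwu
    have hnl : ¬ R.T.IsLeaf u := fun h => hvu (h v hpv)
    obtain ⟨a, b, hab, hiff⟩ := hbinT u hnl
    have hchild : ∀ c, R.T.par c = u → c ≠ u → c = v ∨ c = w := by
      intro c h1 h2
      have hv' := (hiff v).1 ⟨hpv, hvu⟩
      have hw' := (hiff w).1 ⟨hpw, hwu⟩
      have hc' := (hiff c).1 ⟨h1, h2⟩
      rcases hv' with rfl | rfl <;> rcases hw' with rfl | rfl <;>
        rcases hc' with rfl | rfl <;> tauto
    refine ⟨?_, ?_, ?_⟩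
    · -- (IVa)
      constructor
      · intro hh
        obtain ⟨⟨c, hc1, hc2⟩, _⟩ := hO2 u hh
        have hcne : c ≠ u := by
          intro heq
          have hcr : c = R.T.root := by
            by_contra hcr
            exact (R.T.par_ne c hcr) (heq ▸ hc1)
          exact R.trans_ne_root c hc2 hcr
        rcases hchild c hc1 hcne with rfl | rfl
        · exact Or.inl hc2
        · exact Or.inr hc2
      · rintro (h | h)
        · exact hpv ▸ R.trans_hgt v h
        · exact hpw ▸ R.trans_hgt w h
    · -- (IVb)
      intro hspec
      have hγu : μ u = Sum.inl (R.lca (R.sigmaBar u)) := hM2i u hspec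
      have hvt : v ∉ R.trans := fun h => by
        have := R.trans_hgt v h
        rw [hpv, hspec] at this
        exact Event.noConfusion this
      have hwt : w ∉ R.trans := fun h => by
        have := R.trans_hgt w h
        rw [hpw, hspec] at this
        exact Event.noConfusion this
      have hndu : ¬ R.IsDupHGT u := by
        rintro (h | h) <;> rw [hspec] at h <;> exact Event.noConfusion h
      have hltv : R.extLT (μ v) (μ u) :=
        (hM3 v u (R.sfanc_child hpv hvu hvt)).2 (fun h => hndu h.2)
      have hltw : R.extLT (μ w) (μ u) :=
        (hM3 w u (R.sfanc_child hpw hwu hwt)).2 (fun h => hndu h.2)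
      rw [hγu] at hltv hltw
      have hsancv : R.S.sanc (lowPt (μ v)) (R.lca (R.sigmaBar u)) := R.extLT_inl_sanc hltv
      have hsancw : R.S.sanc (lowPt (μ w)) (R.lca (R.sigmaBar u)) := R.extLT_inl_sanc hltw
      have hub : ∀ y, R.S.anc (lowPt (μ v)) y → R.S.anc (lowPt (μ w)) y →
          R.S.anc (R.lca (R.sigmaBar u)) y := by
        intro y h1 h2
        obtain ⟨l0, hl0, hf0⟩ := R.exists_leaf_below hO1 hO2 u
        have hne : (R.sigmaBar u).Nonempty := ⟨R.sig l0, l0, ⟨hl0, hf0⟩, rfl⟩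
        apply (R.lca_spec _ hne).2
        rintro s ⟨l, ⟨hl, hf⟩, rfl⟩
        have hlu : l ≠ u := fun h => hnl (h ▸ hl)
        obtain ⟨c, hc1, hc2, hc3, hc4⟩ := R.fanc_decomp hf hlu
        have hsc : R.sig l ∈ R.sigmaBar c := ⟨l, ⟨hl, hc4⟩, rfl⟩
        have hbelow := R.sig_below hrec' hsc
        rcases hchild c hc1 hc2 with rfl | rfl
        · exact R.S.anc_trans' hbelow h1
        · exact R.S.anc_trans' hbelow h2
      have hlca : R.S.IsLca {lowPt (μ v), lowPt (μ w)} (R.lca (R.sigmaBar u)) := by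
        constructor
        · rintro a (rfl | rfl)
          · exact hsancv.1
          · exact hsancw.1
        · intro y hy
          exact hub y (hy _ (Set.mem_insert _ _)) (hy _ (Set.mem_insert_of_mem _ rfl))
      refine ⟨?_, ?_, ?_⟩
      · show lowPt (μ u) = R.lca {lowPt (μ v), lowPt (μ w)}
        rw [hγu]
        exact R.lca_unique hlca (R.lca_spec _ ⟨_, Set.mem_insert _ _⟩)
      · intro h
        have := hub _ h (R.S.anc_refl _)
        exact hsancw.2 (R.S.anc_antisymm hsancw.1 this)
      · intro h
        have := hub _ (R.S.anc_refl _) h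
        exact hsancv.2 (R.S.anc_antisymm hsancv.1 this)
    · -- (IVc)
      intro hdup
      have hvt : v ∉ R.trans := fun h => by
        have := R.trans_hgt v h
        rw [hpv, hdup] at this
        exact Event.noConfusion this
      have hwt : w ∉ R.trans := fun h => by
        have := R.trans_hgt w h
        rw [hpw, hdup] at this
        exact Event.noConfusion this
      have h1 := R.anc_lowPt_child hrec' hpv hvu hvt
      have h2 := R.anc_lowPt_child hrec' hpw hwu hwt
      apply (R.lca_spec {lowPt (μ v), lowPt (μ w)} ⟨_, Set.mem_insert _ _⟩).2
      rintro a (rfl | rfl)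
      · exact h1
      · exact h2
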